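/- Let m > 0, c > 0, H₀ > 0 and T ≥ 0 be real numbers, and let f : [0, T] → ℝ be a differentiable function with f(0) = H₀ and f'(t) = f(t)²/m − m·c for all t ∈ [0, T]. If either H₀ ≥ m·√c, or T·√c < artanh( H₀/(m·√c) ), then f(t) > 0 for all t ∈ [0, T]. -/

import Mathlib

/-!
Write `b = m √c`, so that the equation reads `f' = (f² - b²) / m` and `b` is an equilibrium.
Its right-hand side is locally Lipschitz, so solutions are unique and, in dimension one, cannot
cross. If `H₀ ≥ b`, then `f` stays above the constant solution `b > 0`. If `H₀ < b`, then `f` is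
the explicit solution `b tanh (artanh (H₀ / b) - √c t)`, which is positive as long as
`√c t < artanh (H₀ / b)`.
-/

/-- The inverse hyperbolic tangent, `artanh x = ½ log((1+x)/(1−x))`. -/
noncomputable def Real.artanhLog (x : ℝ) : ℝ := (1 / 2) * Real.log ((1 + x) / (1 - x))

open Set Real

namespace Real

theorem hasDerivAt_tanh (x : ℝ) : HasDerivAt tanh (1 - tanh x ^ 2) x := by
  rw [show tanh = fun y => sinh y / cosh y from funext tanh_eq_sinh_div_cosh]
  refine ((hasDerivAt_sinh x).div (hasDerivAt_cosh x) (cosh_pos x).ne').congr_deriv ?_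
  field_simp

theorem tanh_pos {x : ℝ} (hx : 0 < x) : 0 < tanh x := by
  rw [tanh_eq_sinh_div_cosh]
  exact div_pos (sinh_pos_iff.2 hx) (cosh_pos x)

theorem artanhLog_eq_artanh {x : ℝ} (hx : x ∈ Icc (-1) 1) : artanhLog x = artanh x :=
  (artanh_eq_half_log hx).symm

end Real

section AutonomousODE

variable {E : Type*} [NormedAddCommGroup E] [NormedSpace ℝ E] {v : E → E} {f g : ℝ → E} {a b : ℝ}

theorem ODE_solution_unique_of_locallyLipschitz (hv : LocallyLipschitz v)
    (hf : ∀ t ∈ Icc a b, HasDerivWithinAt f (v (f t)) (Icc a b) t)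
    (hg : ∀ t ∈ Icc a b, HasDerivWithinAt g (v (g t)) (Icc a b) t)
    (ha : f a = g a) : EqOn f g (Icc a b) := by
  have hfc : ContinuousOn f (Icc a b) := fun t ht => (hf t ht).continuousWithinAt
  have hgc : ContinuousOn g (Icc a b) := fun t ht => (hg t ht).continuousWithinAt
  let K := f '' Icc a b ∪ g '' Icc a b
  have hK : IsCompact K :=
    (isCompact_Icc.image_of_continuousOn hfc).union (isCompact_Icc.image_of_continuousOn hgc)
  obtain ⟨L, hL⟩ := hv.locallyLipschitzOn.exists_lipschitzOnWith_of_compact hK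
  have hIci {h : ℝ → E} (hh : ∀ t ∈ Icc a b, HasDerivWithinAt h (v (h t)) (Icc a b) t)
      (t : ℝ) (ht : t ∈ Ico a b) : HasDerivWithinAt h (v (h t)) (Ici t) t :=
    (hh t (Ico_subset_Icc_self ht)).mono_of_mem_nhdsWithin (Icc_mem_nhdsGE_of_mem ht)
  exact ODE_solution_unique_of_mem_Icc_right (s := fun _ => K) (fun _ _ => hL)
    hfc (hIci hf) (fun t ht => .inl ⟨t, Ico_subset_Icc_self ht, rfl⟩)
    hgc (hIci hg) (fun t ht => .inr ⟨t, Ico_subset_Icc_self ht, rfl⟩) ha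

end AutonomousODE

/-- If the solutions crossed, they would meet first, and uniqueness from the meeting point would
keep them equal afterwards. -/
theorem ODE_solution_le_of_locallyLipschitz {v : ℝ → ℝ} {f g : ℝ → ℝ} {a b : ℝ}
    (hv : LocallyLipschitz v)
    (hf : ∀ t ∈ Icc a b, HasDerivWithinAt f (v (f t)) (Icc a b) t)
    (hg : ∀ t ∈ Icc a b, HasDerivWithinAt g (v (g t)) (Icc a b) t)
    (ha : f a ≤ g a) : ∀ t ∈ Icc a b, f t ≤ g t := by
  by_contra! ⟨t₁, ht₁, hlt⟩
  have hsub : Icc a t₁ ⊆ Icc a b := Icc_subset_Icc_right ht₁.2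
  have hcont : ContinuousOn (fun t => g t - f t) (Icc a t₁) := fun t ht =>
    ((hg t (hsub ht)).continuousWithinAt.sub (hf t (hsub ht)).continuousWithinAt).mono hsub
  obtain ⟨t₀, ht₀, hmeet⟩ : ∃ t₀ ∈ Icc a t₁, g t₀ - f t₀ = 0 :=
    intermediate_value_Icc' ht₁.1 hcont ⟨by linarith, by linarith⟩
  have hsub' : Icc t₀ t₁ ⊆ Icc a b := Icc_subset_Icc ht₀.1 ht₁.2
  have heq := ODE_solution_unique_of_locallyLipschitz hv
    (fun t ht => (hf t (hsub' ht)).mono hsub') (fun t ht => (hg t (hsub' ht)).mono hsub')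
    (sub_eq_zero.1 hmeet).symm ⟨ht₀.2, le_rfl⟩
  exact hlt.ne' heq

noncomputable def riccati (m c x : ℝ) : ℝ := x ^ 2 / m - m * c

theorem locallyLipschitz_riccati (m c : ℝ) : LocallyLipschitz (riccati m c) := by
  have : ContDiff ℝ 1 (riccati m c) := by unfold riccati; fun_prop
  exact this.locallyLipschitz

theorem riccati_mul_sqrt_eq_zero {m c : ℝ} (hc : 0 ≤ c) : riccati m c (m * √c) = 0 := by
  rw [riccati, mul_pow, sq_sqrt hc]
  field_simp
  ring

theorem hasDerivAt_riccati_tanh {m c : ℝ} (hm : m ≠ 0) (hc : 0 ≤ c) (A t : ℝ) :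
    HasDerivAt (fun s => m * √c * tanh (A - √c * s))
      (riccati m c (m * √c * tanh (A - √c * t))) t := by
  have hinner : HasDerivAt (fun s => A - √c * s) (-√c) t := by
    simpa using ((hasDerivAt_id t).const_mul √c).const_sub A
  refine (((hasDerivAt_tanh _).comp t hinner).const_mul (m * √c)).congr_deriv ?_
  rw [riccati, mul_pow, mul_pow, sq_sqrt hc]
  field_simp
  linear_combination (tanh (A - √c * t) ^ 2 - 1) * sq_sqrt hc

section RiccatiSolution

variable {m c a b : ℝ} {f : ℝ → ℝ}

theorem mul_sqrt_le_of_riccati (hc : 0 ≤ c)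
    (hf : ∀ t ∈ Icc a b, HasDerivWithinAt f (riccati m c (f t)) (Icc a b) t)
    (h0 : m * √c ≤ f a) : ∀ t ∈ Icc a b, m * √c ≤ f t :=
  ODE_solution_le_of_locallyLipschitz (locallyLipschitz_riccati m c)
    (fun t _ => (riccati_mul_sqrt_eq_zero hc).symm ▸ hasDerivWithinAt_const t _ _) hf h0

theorem eqOn_tanh_of_riccati (hm : m ≠ 0) (hc : 0 ≤ c)
    (hf : ∀ t ∈ Icc 0 b, HasDerivWithinAt f (riccati m c (f t)) (Icc 0 b) t)
    (h0 : |f 0| < m * √c) :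
    EqOn f (fun t => m * √c * tanh (artanh (f 0 / (m * √c)) - √c * t)) (Icc 0 b) := by
  have hb : 0 < m * √c := (abs_nonneg _).trans_lt h0
  have hx : f 0 / (m * √c) ∈ Ioo (-1) 1 := by
    rw [mem_Ioo, lt_div_iff₀ hb, div_lt_one hb]
    constructor <;> linarith [abs_lt.1 h0]
  refine ODE_solution_unique_of_locallyLipschitz (locallyLipschitz_riccati m c) hf
    (fun t _ => (hasDerivAt_riccati_tanh hm hc _ t).hasDerivWithinAt) ?_
  simp only [mul_zero, sub_zero, tanh_artanh hx]
  exact (mul_div_cancel₀ _ hb.ne').symm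

end RiccatiSolution

theorem riccati_solution_positive_general (m c H₀ T : ℝ) (hm : 0 < m) (hc : 0 < c)
    (hH₀ : 0 < H₀)
    (f : ℝ → ℝ) (hf0 : f 0 = H₀)
    (hf : ∀ t ∈ Set.Icc (0 : ℝ) T,
      HasDerivWithinAt f ((f t) ^ 2 / m - m * c) (Set.Icc 0 T) t)
    (hcase : m * Real.sqrt c ≤ H₀ ∨
      T * Real.sqrt c < Real.artanhLog (H₀ / (m * Real.sqrt c))) :
    ∀ t ∈ Set.Icc (0 : ℝ) T, 0 < f t := by
  intro t ht
  have hb : 0 < m * √c := by positivity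
  rcases le_or_gt (m * √c) H₀ with hle | hlt
  · exact hb.trans_le (mul_sqrt_le_of_riccati hc.le hf (hf0 ▸ hle) t ht)
  · have hx : H₀ / (m * √c) ∈ Icc (-1) 1 := by
      rw [mem_Icc, le_div_iff₀ hb, div_le_one hb]
      constructor <;> linarith
    have hA := hcase.resolve_left hlt.not_ge
    rw [artanhLog_eq_artanh hx] at hA
    have hf0' : |f 0| < m * √c := by rwa [hf0, abs_of_pos hH₀]
    rw [eqOn_tanh_of_riccati hm.ne' hc.le hf hf0' ht, hf0]
    exact mul_pos hb (tanh_pos (by nlinarith [ht.2, sqrt_nonneg c]))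

/-- Positivity of the exact Riccati solution: if `f' = f²/m − m·c` on `[0,T]`
with `f(0) = H₀ > 0`, and either `H₀ ≥ m√c` or `T√c < artanh(H₀/(m√c))`, then
`f > 0` on `[0,T]`. -/
theorem riccati_solution_positive (m c H₀ T : ℝ) (hm : 0 < m) (hc : 0 < c)
    (hH₀ : 0 < H₀) (hT : 0 ≤ T)
    (f : ℝ → ℝ) (hf0 : f 0 = H₀)
    (hf : ∀ t ∈ Set.Icc (0 : ℝ) T,
      HasDerivWithinAt f ((f t) ^ 2 / m - m * c) (Set.Icc 0 T) t)
    (hcase : m * Real.sqrt c ≤ H₀ ∨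
      T * Real.sqrt c < Real.artanhLog (H₀ / (m * Real.sqrt c))) :
    ∀ t ∈ Set.Icc (0 : ℝ) T, 0 < f t :=
  riccati_solution_positive_general m c H₀ T hm hc hH₀ f hf0 hf hcase
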